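/- Let V be a Novikov algebra with operation ∘ and let a(z), b(z), c(z) be formal distributions over V such that a(w)∘c(z)·(w−z)^N = 0 for some N ∈ ℤ₊, and the pair (b(z), c(z)) is local. Then for every n ∈ ℤ₊, a(w)∘(b₍ₙ₎c)(z)·(w−z)^N = 0; i.e., the pair (a(z), (b₍ₙ₎c)(z)) is local with locality value at most N. (The proof uses only left commutativity x∘(y∘z) = y∘(x∘z).) -/

import Mathlib

/-!
Expanding `(b₍ₙ₎c)_m = Σ_t (−1)^t C(n,t) b_{n−t} ∘ c_{m+t}`, left commutativity lets each
`b_{n−t}` be pulled out to the left of `a`, so every locality sum of `(a, b₍ₙ₎c)` is a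
combination of the elements `b_{n−t} ∘ (locality sum of (a, c))`, all of which vanish.
-/

variable {k V : Type*} [Field k] [CharZero k] [AddCommGroup V] [Module k V]

/-- `Σ_{s=0}^{N} (−1)^s C(N,s) a_{n−s} ∘ b_{m+s}`. -/
def locSum (mul : V →ₗ[k] V →ₗ[k] V) (a b : ℤ → V) (N : ℕ) (n m : ℤ) : V :=
  ∑ s ∈ Finset.range (N + 1),
    ((-1) ^ s * (N.choose s) : ℤ) • mul (a (n - (s : ℤ))) (b (m + (s : ℤ)))

/-- The `n`-th product `(b₍ₙ₎c)(z)`: `(b₍ₙ₎c)ₘ = Σ_{s≥0} (−1)^s C(n,s) b_{n−s} ∘ c_{m+s}`. -/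
def nProd (mul : V →ₗ[k] V →ₗ[k] V) (b c : ℤ → V) (n : ℕ) : ℤ → V :=
  fun m => locSum mul b c n (n : ℤ) m

set_option linter.unusedSectionVars false

theorem locSum_finset_sum_right {ι : Type*} (mul : V →ₗ[k] V →ₗ[k] V) (a : ℤ → V)
    (T : Finset ι) (g : ι → ℤ → V) (N : ℕ) (p q : ℤ) :
    locSum mul a (fun m => ∑ i ∈ T, g i m) N p q = ∑ i ∈ T, locSum mul a (g i) N p q := by
  simp only [locSum, map_sum, Finset.smul_sum]
  exact Finset.sum_comm

theorem locSum_zsmul_right (mul : V →ₗ[k] V →ₗ[k] V) (a c : ℤ → V) (r : ℤ) (N : ℕ)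
    (p q : ℤ) : locSum mul a (fun m => r • c m) N p q = r • locSum mul a c N p q := by
  simp only [locSum, LinearMap.map_smul_of_tower, smul_comm _ r, Finset.smul_sum]

theorem locSum_mul_left_of_commute (mul : V →ₗ[k] V →ₗ[k] V) (x : V)
    (hx : ∀ y z : V, mul y (mul x z) = mul x (mul y z)) (a c : ℤ → V) (j : ℤ) (N : ℕ)
    (p q : ℤ) :
    locSum mul a (fun m => mul x (c (m + j))) N p q = mul x (locSum mul a c N p (q + j)) := by
  simp only [locSum, map_sum, LinearMap.map_smul_of_tower, hx, add_right_comm q]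

theorem stmt_11_general (mul : V →ₗ[k] V →ₗ[k] V)
    (lcom : ∀ x y z : V, mul x (mul y z) = mul y (mul x z))
    (a b c : ℤ → V) (N : ℕ)
    (hac : ∀ n m : ℤ, locSum mul a c N n m = 0) :
    ∀ n : ℕ, ∀ p q : ℤ, locSum mul a (nProd mul b c n) N p q = 0 := by
  intro n p q
  have hprod : nProd mul b c n = fun m => ∑ t ∈ Finset.range (n + 1),
      ((-1) ^ t * (n.choose t) : ℤ) • mul (b (n - t)) (c (m + t)) := rfl
  rw [hprod, locSum_finset_sum_right]
  refine Finset.sum_eq_zero fun t _ => ?_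
  rw [locSum_zsmul_right, locSum_mul_left_of_commute mul _ (fun y z => lcom y _ z), hac,
    map_zero, smul_zero]

/-- Let `V` be a Novikov algebra, and let `a(z), b(z), c(z)` be formal distributions over
`V` such that `a(w) ∘ c(z) (w−z)^N = 0` and `(b(z), c(z))` is a local pair. Then for every
`n ∈ ℤ₊`, `a(w) ∘ (b₍ₙ₎c)(z) (w−z)^N = 0`: the pair `(a(z), (b₍ₙ₎c)(z))` is local with
locality value at most `N`. -/
theorem stmt_11 (mul : V →ₗ[k] V →ₗ[k] V)
    (rsym : ∀ x y z : V,
      mul (mul x y) z - mul x (mul y z) = mul (mul x z) y - mul x (mul z y))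
    (lcom : ∀ x y z : V, mul x (mul y z) = mul y (mul x z))
    (a b c : ℤ → V) (N : ℕ)
    (hac : ∀ n m : ℤ, locSum mul a c N n m = 0)
    (hbc : ∃ M : ℕ, ∀ n m : ℤ, locSum mul b c M n m = 0) :
    ∀ n : ℕ, ∀ p q : ℤ, locSum mul a (nProd mul b c n) N p q = 0 :=
  stmt_11_general mul lcom a b c N hac
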